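/- If ζ₈ were a norm from K = ℚ(ζ₈, √5) to ℚ(ζ₈), then i would be a norm from ℚ(i, √5) to ℚ(i). More precisely: if there exists x ∈ K with N_{K/ℚ(ζ₈)}(x) = ζ₈, then there exists z ∈ ℚ(i, √5) with N_{ℚ(i,√5)/ℚ(i)}(z) = i. -/

import Mathlib

open IntermediateField Polynomial
set_option maxHeartbeats 1000000
set_option synthInstance.maxHeartbeats 400000

noncomputable def zeta8 : ℂ := Complex.exp (Complex.I * Real.pi / 4)

noncomputable def F8 : IntermediateField ℚ ℂ := ℚ⟮zeta8⟯

noncomputable def K8 : IntermediateField (↥F8) ℂ :=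
  IntermediateField.adjoin (↥F8) {((Real.sqrt 5 : ℝ) : ℂ)}

noncomputable def Fi : IntermediateField ℚ ℂ := ℚ⟮Complex.I⟯

noncomputable def Ki : IntermediateField (↥Fi) ℂ :=
  IntermediateField.adjoin (↥Fi) {((Real.sqrt 5 : ℝ) : ℂ)}


lemma rat_sq_ne (q : ℚ) (n : ℤ) (hn : n = 2 ∨ n = 5 ∨ n = 10) : q ^ 2 ≠ (n : ℚ) := by
  intro h
  have h1 : q.num ^ 2 = n := by
    have := congrArg Rat.num h
    simpa using this
  have h2 : q.num.natAbs ^ 2 = n.natAbs := by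
    rw [← Int.natAbs_pow, h1]
  have h3 : q.num.natAbs ≤ 3 := by nlinarith [h2, (by rcases hn with rfl|rfl|rfl <;> decide : n.natAbs ≤ 10)]
  rcases hn with rfl|rfl|rfl <;> interval_cases h : q.num.natAbs <;> omega
noncomputable def s5 : ℂ := ((Real.sqrt 5 : ℝ) : ℂ)

lemma s5_sq : s5 ^ 2 = 5 := by
  have h : Real.sqrt 5 ^ 2 = 5 := Real.sq_sqrt (by norm_num)
  rw [s5, ← Complex.ofReal_pow, h]
  norm_num

lemma coe5 (F : IntermediateField ℚ ℂ) : ((5 : ↥F) : ℂ) = 5 := map_ofNat (algebraMap (↥F) ℂ) 5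

lemma minpoly_s5 (F : IntermediateField ℚ ℂ) (hF : s5 ∉ F) :
    (minpoly (↥F) s5).natDegree = 2 := by
  have hint : IsIntegral (↥F) s5 :=
    ⟨X ^ 2 - C 5, monic_X_pow_sub_C 5 (by norm_num), by simp [s5_sq, coe5]⟩
  have hdvd : minpoly (↥F) s5 ∣ X ^ 2 - C 5 := minpoly.dvd _ _ (by simp [s5_sq, coe5])
  have hle : (minpoly (↥F) s5).natDegree ≤ 2 := by
    have := Polynomial.natDegree_le_of_dvd hdvd (by
      intro h
      have := congrArg natDegree h
      simp [natDegree_X_pow_sub_C] at this)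
    simpa [natDegree_X_pow_sub_C] using this
  have hpos : 0 < (minpoly (↥F) s5).natDegree := minpoly.natDegree_pos hint
  have hne : (minpoly (↥F) s5).natDegree ≠ 1 := by
    intro h1
    have : (minpoly (↥F) s5).degree = 1 := by
      rw [degree_eq_natDegree (minpoly.ne_zero hint), h1]; rfl
    obtain ⟨y, hy⟩ := (minpoly.degree_eq_one_iff).mp this
    exact hF (hy ▸ y.2)
  omega

lemma norm_quad (F : IntermediateField ℚ ℂ) (hF : s5 ∉ F) (x : ↥(adjoin (↥F) {s5})) :
    ∃ a b : ↥F, (x : ℂ) = (a : ℂ) + (b : ℂ) * s5 ∧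
      ((Algebra.norm (↥F) x : ↥F) : ℂ) = (a : ℂ) ^ 2 - 5 * (b : ℂ) ^ 2 := by
  have hint : IsIntegral (↥F) s5 :=
    ⟨Polynomial.X ^ 2 - Polynomial.C 5, Polynomial.monic_X_pow_sub_C 5 (by norm_num),
      by simp [s5_sq, coe5]⟩
  set pb := adjoin.powerBasis hint with hpb
  have hdim : pb.dim = 2 := by
    rw [hpb, adjoin.powerBasis_dim]; exact minpoly_s5 F hF
  set b2 : Module.Basis (Fin 2) (↥F) ↥(adjoin (↥F) {s5}) := pb.basis.reindex (finCongr hdim) with hb2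
  have hb0 : b2 0 = 1 := by
    rw [hb2, Module.Basis.reindex_apply, pb.basis_eq_pow]
    norm_num
  have hb1 : b2 1 = pb.gen := by
    rw [hb2, Module.Basis.reindex_apply, pb.basis_eq_pow]
    have : (((finCongr hdim).symm 1 : Fin pb.dim) : ℕ) = 1 := rfl
    rw [this, pow_one]
  have hgen : ((pb.gen : ↥(adjoin (↥F) {s5})) : ℂ) = s5 := rfl
  have key : ∀ u v : ↥F, b2.repr (u • b2 0 + v • b2 1) 0 = u ∧
      b2.repr (u • b2 0 + v • b2 1) 1 = v := by
    intro u v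
    constructor <;> simp [map_add, map_smul, Module.Basis.repr_self, Finsupp.single_apply]
  set a := b2.repr x 0 with ha
  set b := b2.repr x 1 with hb
  have hx : x = a • b2 0 + b • b2 1 := by
    have h := b2.sum_repr x
    rw [Fin.sum_univ_two] at h
    exact h.symm
  have scoe : ∀ (u : ↥F) (y : ↥(adjoin (↥F) {s5})), ((u • y : ↥(adjoin (↥F) {s5})) : ℂ) = (u : ℂ) * (y : ℂ) := fun _ _ => rfl
  have hxc : (x : ℂ) = (a : ℂ) + (b : ℂ) * s5 := by
    rw [hx]
    push_cast
    simp only [show ∀ (u : ↥F) (w : ℂ), u • w = (u : ℂ) * w from fun _ _ => rfl]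
    rw [hb0, hb1, hgen]
    push_cast
    ring
  have hmul1 : x * b2 1 = (5 * b) • b2 0 + a • b2 1 := by
    apply Subtype.val_injective
    have e1 : ((x * b2 1 : ↥(adjoin (↥F) {s5})) : ℂ) = (x : ℂ) * ((b2 1 : ℂ)) := rfl
    have e2 : (((5 * b) • b2 0 + a • b2 1 : ↥(adjoin (↥F) {s5})) : ℂ)
        = ((5 * b : ↥F) : ℂ) * ((b2 0 : ℂ)) + (a : ℂ) * ((b2 1 : ℂ)) := by
      push_cast
      simp only [show ∀ (u : ↥F) (w : ℂ), u • w = (u : ℂ) * w from fun _ _ => rfl]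
      push_cast
      ring
    rw [e1, e2, hb0, hb1, hgen, hxc]
    push_cast [coe5]
    linear_combination (b : ℂ) * s5_sq
  have hmul0 : x * b2 0 = a • b2 0 + b • b2 1 := by conv_lhs => rw [hb0, mul_one, hx]
  have hnorm := Algebra.norm_eq_matrix_det b2 x
  rw [Matrix.det_fin_two] at hnorm
  rw [Algebra.leftMulMatrix_eq_repr_mul, Algebra.leftMulMatrix_eq_repr_mul,
    Algebra.leftMulMatrix_eq_repr_mul, Algebra.leftMulMatrix_eq_repr_mul,
    hmul0, hmul1, (key a b).1, (key a b).2, (key (5*b) a).1, (key (5*b) a).2] at hnorm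
  refine ⟨a, b, hxc, ?_⟩
  rw [hnorm]
  push_cast [coe5]
  ring

lemma decomp_unique (E : IntermediateField ℚ ℂ) (t : ℂ) (ht : t ∉ E) {a b c d : ℂ}
    (ha : a ∈ E) (hb : b ∈ E) (hc : c ∈ E) (hd : d ∈ E) (h : a + b * t = c + d * t) :
    a = c ∧ b = d := by
  by_cases hbd : b = d
  · subst hbd
    exact ⟨by linear_combination h, rfl⟩
  · exfalso
    apply ht
    have hne : d - b ≠ 0 := sub_ne_zero.2 (Ne.symm hbd)
    have : t = (a - c) / (d - b) := by
      field_simp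
      linear_combination -h
    rw [this]
    exact div_mem (sub_mem ha hc) (sub_mem hd hb)

noncomputable def spanT (E : IntermediateField ℚ ℂ) (t : ℂ) (h2 : t ^ 2 ∈ E) (ht : t ∉ E) :
    IntermediateField ℚ ℂ where
  carrier := {x | ∃ a ∈ E, ∃ b ∈ E, x = a + b * t}
  mul_mem' := by
    rintro x y ⟨a, ha, b, hb, rfl⟩ ⟨c, hc, d, hd, rfl⟩
    exact ⟨a * c + b * d * t ^ 2, add_mem (mul_mem ha hc) (mul_mem (mul_mem hb hd) h2),
      a * d + b * c, add_mem (mul_mem ha hd) (mul_mem hb hc), by ring⟩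
  one_mem' := ⟨1, one_mem E, 0, zero_mem E, by ring⟩
  add_mem' := by
    rintro x y ⟨a, ha, b, hb, rfl⟩ ⟨c, hc, d, hd, rfl⟩
    exact ⟨a + c, add_mem ha hc, b + d, add_mem hb hd, by ring⟩
  zero_mem' := ⟨0, zero_mem E, 0, zero_mem E, by ring⟩
  inv_mem' := by
    rintro x ⟨a, ha, b, hb, rfl⟩
    by_cases hx : a + b * t = 0
    · rw [hx]
      exact ⟨0, zero_mem E, 0, zero_mem E, by simp⟩
    · set N : ℂ := a ^ 2 - b ^ 2 * t ^ 2 with hN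
      have hNmem : N ∈ E := sub_mem (pow_mem ha 2) (mul_mem (pow_mem hb 2) h2)
      have hNne : N ≠ 0 := by
        intro h0
        have hfac : (a + b * t) * (a - b * t) = 0 := by rw [← h0]; ring
        rcases mul_eq_zero.mp hfac with h | h
        · exact hx h
        · by_cases hbz : b = 0
          · apply hx
            rw [hbz] at h ⊢
            simpa using h
          · apply ht
            have : t = a / b := by field_simp; linear_combination -h
            rw [this]
            exact div_mem ha hb
      refine ⟨a / N, div_mem ha hNmem, -b / N, div_mem (neg_mem hb) hNmem, ?_⟩
      apply inv_eq_of_mul_eq_one_right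
      field_simp
      rw [hN]
      ring
  algebraMap_mem' := fun q => ⟨algebraMap ℚ ℂ q, IntermediateField.algebraMap_mem E q, 0, zero_mem E, by ring⟩
lemma sqrt2_sq : Real.sqrt 2 ^ 2 = 2 := Real.sq_sqrt (by norm_num)

lemma zeta8_eq : zeta8 = ((Real.sqrt 2 / 2 : ℝ) : ℂ) + ((Real.sqrt 2 / 2 : ℝ) : ℂ) * Complex.I := by
  rw [zeta8]
  have h : Complex.I * (Real.pi : ℂ) / 4 = ((Real.pi / 4 : ℝ) : ℂ) * Complex.I := by
    push_cast; ring
  rw [h, Complex.exp_mul_I, ← Complex.ofReal_cos, ← Complex.ofReal_sin,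
    Real.cos_pi_div_four, Real.sin_pi_div_four]

lemma zeta8_sq : zeta8 ^ 2 = Complex.I := by
  rw [zeta8_eq]
  have h2 : ((Real.sqrt 2 : ℝ) : ℂ) ^ 2 = 2 := by
    rw [← Complex.ofReal_pow, sqrt2_sq]; norm_num
  push_cast
  linear_combination (1/4 + Complex.I/2 + Complex.I^2/4) * h2 + (1/2) * Complex.I_sq

lemma I_mem_Fi : Complex.I ∈ Fi := mem_adjoin_simple_self ℚ Complex.I

lemma I_not_bot : Complex.I ∉ (⊥ : IntermediateField ℚ ℂ) := by
  intro h
  obtain ⟨q, hq⟩ := IntermediateField.mem_bot.mp h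
  have : ((q : ℚ) : ℂ) = Complex.I := by rw [← hq, eq_ratCast]
  have him := congrArg Complex.im this
  simp at him

lemma I_sq_bot : Complex.I ^ 2 ∈ (⊥ : IntermediateField ℚ ℂ) := by
  rw [Complex.I_sq]; exact neg_mem (one_mem _)

lemma Fi_decomp {x : ℂ} (hx : x ∈ Fi) : ∃ a b : ℚ, x = (a : ℂ) + (b : ℂ) * Complex.I := by
  have hle : Fi ≤ spanT ⊥ Complex.I I_sq_bot I_not_bot := by
    rw [Fi]
    exact adjoin_le_iff.mpr (Set.singleton_subset_iff.mpr
      ⟨0, zero_mem _, 1, one_mem _, by ring⟩)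
  obtain ⟨a, ha, b, hb, rfl⟩ := hle hx
  obtain ⟨qa, hqa⟩ := IntermediateField.mem_bot.mp ha
  obtain ⟨qb, hqb⟩ := IntermediateField.mem_bot.mp hb
  exact ⟨qa, qb, by rw [← hqa, ← hqb, eq_ratCast, eq_ratCast]⟩

lemma zeta8_not_Fi : zeta8 ∉ Fi := by
  intro h
  obtain ⟨a, b, hab⟩ := Fi_decomp h
  rw [zeta8_eq, Complex.ext_iff] at hab
  simp at hab
  obtain ⟨hre, -⟩ := hab
  refine rat_sq_ne (2 * a) 2 (Or.inl rfl) ?_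
  have : ((2 * a : ℚ) : ℝ) ^ 2 = 2 := by
    have h' : ((2 * a : ℚ) : ℝ) = Real.sqrt 2 := by push_cast; linarith
    rw [h', sqrt2_sq]
  exact_mod_cast this

lemma s5_not_Fi : s5 ∉ Fi := by
  intro h
  obtain ⟨a, b, hab⟩ := Fi_decomp h
  rw [s5, Complex.ext_iff] at hab
  simp at hab
  obtain ⟨hre, -⟩ := hab
  refine rat_sq_ne a 5 (Or.inr (Or.inl rfl)) ?_
  have : ((a : ℚ) : ℝ) ^ 2 = 5 := by
    rw [← hre]
    exact Real.sq_sqrt (by norm_num)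
  exact_mod_cast this

lemma zeta8_sq_mem_Fi : zeta8 ^ 2 ∈ Fi := by rw [zeta8_sq]; exact I_mem_Fi

lemma F8_decomp {x : ℂ} (hx : x ∈ F8) :
    ∃ a b : ℂ, a ∈ Fi ∧ b ∈ Fi ∧ x = a + b * zeta8 := by
  have hle : F8 ≤ spanT Fi zeta8 zeta8_sq_mem_Fi zeta8_not_Fi := by
    rw [F8]
    exact adjoin_le_iff.mpr (Set.singleton_subset_iff.mpr
      ⟨0, zero_mem _, 1, one_mem _, by ring⟩)
  obtain ⟨a, ha, b, hb, rfl⟩ := hle hx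
  exact ⟨a, b, ha, hb, rfl⟩

lemma sqrt5_sq : Real.sqrt 5 ^ 2 = 5 := Real.sq_sqrt (by norm_num)

lemma s5_not_F8 : s5 ∉ F8 := by
  intro h
  obtain ⟨A, B, hA, hB, hab⟩ := F8_decomp h
  obtain ⟨a0, a1, rfl⟩ := Fi_decomp hA
  obtain ⟨b0, b1, rfl⟩ := Fi_decomp hB
  rw [s5, zeta8_eq, Complex.ext_iff] at hab
  simp at hab
  obtain ⟨h1, h2⟩ := hab
  -- h1 : √5 = a0 + (b0*(√2/2) - b1*(√2/2)), h2 : 0 = a1 + (b0*(√2/2) + b1*(√2/2))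
  have hq : (b0 + b1) ^ 2 = 2 * a1 ^ 2 := by
    have hr : ((b0 + b1 : ℚ) : ℝ) ^ 2 = 2 * ((a1 : ℚ) : ℝ) ^ 2 := by
      push_cast
      linear_combination (2*((a1:ℝ) - (b0+b1)*(Real.sqrt 2/2)))*h2
        - (((b0:ℝ)+b1)^2/2)*sqrt2_sq
    exact_mod_cast hr
  have ha1 : a1 = 0 := by
    by_contra ha1
    refine rat_sq_ne ((b0 + b1) / a1) 2 (Or.inl rfl) ?_
    field_simp
    push_cast
    linarith [hq]
  have hb1 : b1 = -b0 := by
    have : (b0 + b1) ^ 2 = 0 := by rw [hq, ha1]; ring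
    have := pow_eq_zero_iff (n := 2) (by norm_num) |>.mp this
    linarith
  rw [hb1] at h1
  push_cast at h1
  -- h1 : √5 = a0 + (b0*(√2/2) + b0*(√2/2)) roughly
  by_cases hb0 : b0 = 0
  · rw [hb0] at h1
    refine rat_sq_ne a0 5 (Or.inr (Or.inl rfl)) ?_
    have heq : ((a0 : ℚ) : ℝ) = Real.sqrt 5 := by push_cast at h1 ⊢; linarith
    have h5 : ((a0 : ℚ) : ℝ) ^ 2 = 5 := by rw [heq, sqrt5_sq]
    exact_mod_cast h5
  by_cases ha0 : a0 = 0
  · rw [ha0] at h1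
    refine rat_sq_ne (2 * b0) 10 (Or.inr (Or.inr rfl)) ?_
    have hr : ((2 * b0 : ℚ) : ℝ) ^ 2 = 10 := by
      push_cast at h1 ⊢
      linear_combination (-2*Real.sqrt 5 - 2*(b0:ℝ)*Real.sqrt 2)*h1 + 2*sqrt5_sq
        - 2*(b0:ℝ)^2*sqrt2_sq
    exact_mod_cast hr
  · have key : Real.sqrt 2 * (2 * a0 * b0) = 5 - (a0:ℝ)^2 - 2*(b0:ℝ)^2 := by
      push_cast at h1
      linear_combination (-Real.sqrt 5 - (a0:ℝ) - (b0:ℝ)*Real.sqrt 2)*h1 + sqrt5_sq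
        - (b0:ℝ)^2*sqrt2_sq
    have hd : ((2 * a0 * b0 : ℚ) : ℝ) ≠ 0 := by
      push_cast
      intro h0
      rcases mul_eq_zero.mp h0 with h0 | h0
      · rcases mul_eq_zero.mp h0 with h0 | h0
        · norm_num at h0
        · exact ha0 (by exact_mod_cast h0)
      · exact hb0 (by exact_mod_cast h0)
    refine rat_sq_ne ((5 - a0^2 - 2*b0^2) / (2*a0*b0)) 2 (Or.inl rfl) ?_
    have hs : Real.sqrt 2 = (((5 - a0^2 - 2*b0^2) / (2*a0*b0) : ℚ) : ℝ) := by
      push_cast at hd ⊢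
      rw [eq_div_iff hd]
      push_cast
      linear_combination key
    have h2' : (((5 - a0^2 - 2*b0^2) / (2*a0*b0) : ℚ) : ℝ) ^ 2 = 2 := by rw [← hs, sqrt2_sq]
    exact_mod_cast h2' 

lemma ratC_mem (E : IntermediateField ℚ ℂ) (q : ℚ) : ((q : ℚ) : ℂ) ∈ E := by
  rw [← eq_ratCast (algebraMap ℚ ℂ) q]; exact E.algebraMap_mem q

/-- If ζ₈ were a norm from ℚ(ζ₈,√5) to ℚ(ζ₈), then i would be a norm
from ℚ(i,√5) to ℚ(i). -/
theorem stmt2 :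
    (∃ x : ↥K8,
      Algebra.norm (↥F8) x
        = ⟨zeta8, IntermediateField.mem_adjoin_simple_self ℚ zeta8⟩) →
    (∃ z : ↥Ki,
      Algebra.norm (↥Fi) z
        = ⟨Complex.I, IntermediateField.mem_adjoin_simple_self ℚ Complex.I⟩) := by
  rintro ⟨x, hx⟩
  have hxc : ((Algebra.norm (↥F8) x : ↥F8) : ℂ) = zeta8 := by rw [hx]
  obtain ⟨a, b, hxeq, hnorm⟩ := norm_quad F8 s5_not_F8 x
  have hz : (a : ℂ) ^ 2 - 5 * (b : ℂ) ^ 2 = zeta8 := by rw [← hnorm]; exact hxc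
  obtain ⟨A0, A1, hA0, hA1, ha⟩ := F8_decomp a.2
  obtain ⟨B0, B1, hB0, hB1, hb⟩ := F8_decomp b.2
  rw [ha, hb] at hz
  set P : ℂ := A0^2 + Complex.I*A1^2 - 5*B0^2 - 5*Complex.I*B1^2 with hPdef
  set Q : ℂ := 2*A0*A1 - 10*B0*B1 with hQdef
  have hPQ : P + Q * zeta8 = 0 + 1 * zeta8 := by
    rw [hPdef, hQdef]
    linear_combination hz - (A1^2 - 5*B1^2) * zeta8_sq
  have hPmem : P ∈ Fi := by
    rw [hPdef]
    exact sub_mem (sub_mem (add_mem (pow_mem hA0 2) (mul_mem I_mem_Fi (pow_mem hA1 2)))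
      (mul_mem (by exact_mod_cast ratC_mem Fi 5) (pow_mem hB0 2)))
      (mul_mem (mul_mem (by exact_mod_cast ratC_mem Fi 5) I_mem_Fi) (pow_mem hB1 2))
  have hQmem : Q ∈ Fi := by
    rw [hQdef]
    exact sub_mem (mul_mem (mul_mem (by exact_mod_cast ratC_mem Fi 2) hA0) hA1)
      (mul_mem (mul_mem (by exact_mod_cast ratC_mem Fi 10) hB0) hB1)
  obtain ⟨hP0, hQ1⟩ := decomp_unique Fi zeta8 zeta8_not_Fi hPmem hQmem
    (zero_mem Fi) (one_mem Fi) hPQ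
  set C : ℂ := A0^2 - Complex.I*A1^2 + 5*B0^2 - 5*Complex.I*B1^2 with hCdef
  set D : ℂ := 2*A0*B0 - 2*Complex.I*A1*B1 with hDdef
  set E : ℂ := (C + 5*D)/2 with hEdef
  set Fq : ℂ := (C + D)/2 with hFdef
  have hEF : E^2 - 5*Fq^2 = Complex.I := by
    rw [hEdef, hFdef, hCdef, hDdef]
    rw [hPdef] at hP0
    rw [hQdef] at hQ1
    linear_combination (-(A0^2 + Complex.I*A1^2 - 5*B0^2 - 5*Complex.I*B1^2))*hP0
      + Complex.I*((2*A0*A1 - 10*B0*B1)+1)*hQ1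
  have hCmem : C ∈ Fi := by
    rw [hCdef]
    exact sub_mem (add_mem (sub_mem (pow_mem hA0 2) (mul_mem I_mem_Fi (pow_mem hA1 2)))
      (mul_mem (by exact_mod_cast ratC_mem Fi 5) (pow_mem hB0 2)))
      (mul_mem (mul_mem (by exact_mod_cast ratC_mem Fi 5) I_mem_Fi) (pow_mem hB1 2))
  have hDmem : D ∈ Fi := by
    rw [hDdef]
    exact sub_mem (mul_mem (mul_mem (by exact_mod_cast ratC_mem Fi 2) hA0) hB0)
      (mul_mem (mul_mem (mul_mem (by exact_mod_cast ratC_mem Fi 2) I_mem_Fi) hA1) hB1)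
  have hEmem : E ∈ Fi := by
    rw [hEdef]
    exact div_mem (add_mem hCmem (mul_mem (by exact_mod_cast ratC_mem Fi 5) hDmem))
      (by exact_mod_cast ratC_mem Fi 2)
  have hFmem : Fq ∈ Fi := by
    rw [hFdef]
    exact div_mem (add_mem hCmem hDmem) (by exact_mod_cast ratC_mem Fi 2)
  have hE' : E ∈ adjoin (↥Fi) {s5} := (adjoin (↥Fi) {s5}).algebraMap_mem ⟨E, hEmem⟩
  have hF' : Fq ∈ adjoin (↥Fi) {s5} := (adjoin (↥Fi) {s5}).algebraMap_mem ⟨Fq, hFmem⟩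
  have hs' : s5 ∈ adjoin (↥Fi) {s5} := mem_adjoin_simple_self (↥Fi) s5
  set z : ↥(adjoin (↥Fi) {s5}) := ⟨E + Fq * s5, add_mem hE' (mul_mem hF' hs')⟩ with hzdef
  obtain ⟨a', b', hz1, hz2⟩ := norm_quad Fi s5_not_Fi z
  have huniq := decomp_unique Fi s5 s5_not_Fi a'.2 b'.2 hEmem hFmem (by rw [← hz1])
  refine ⟨z, Subtype.val_injective ?_⟩
  show ((Algebra.norm (↥Fi) z : ↥Fi) : ℂ) = Complex.I
  rw [hz2, huniq.1, huniq.2]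
  exact hEF
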